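/- arXiv:1907.06688 — 3 statements merged into one kernel-verified Lean document; each statement's English description precedes it below -/
import Mathlib

section
/- If A is an m×n matrix over a field, then the branch-depth of A is at most its dual tree-depth: bd(A) ≤ td_D(A). -/
/-! Infrastructure: rooted trees, depth-decompositions and branch-depth of matroids,
following the definitions of Kardoš, Král', Liebenau, Mach and of the paper
"Optimal matrix tree-depth and a row-invariant parameterized algorithm for
integer programming". -/

/-- A rooted tree on a (nonempty) finite vertex type `V`, given by its root and its
parent function: the parent of the root is the root itself, and from any vertex the
root is reached by iterating the parent function. -/
structure RTree (V : Type) [Fintype V] [DecidableEq V] where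
  root : V
  parent : V → V
  parent_root : parent root = root
  reach : ∀ v : V, ∃ n : ℕ, parent^[n] v = root

namespace RTree

variable {V : Type} [Fintype V] [DecidableEq V]

/-- A vertex is a leaf if it has no children. -/
def IsLeaf (T : RTree V) (v : V) : Prop :=
  ∀ u : V, T.parent u = v → u = v

/-- The non-root vertices on the path from `v` to the root of `T`; they are in bijective
correspondence with the edges of this path (each such vertex corresponds to the edge
joining it to its parent). -/
def pathEdges (T : RTree V) (v : V) : Set V :=
  {u | u ≠ T.root ∧ ∃ n : ℕ, T.parent^[n] v = u}

/-- The number of edges of the tree. -/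
def edgeCount (T : RTree V) : ℕ := Fintype.card V - 1

/-- The depth of a vertex: the number of edges on the path from the root to it. -/
noncomputable def depthV (T : RTree V) (v : V) : ℕ :=
  sInf {n : ℕ | T.parent^[n] v = T.root}

/-- The depth of the tree: the maximum number of edges on a path from the root to a leaf. -/
noncomputable def depth (T : RTree V) : ℕ :=
  Finset.univ.sup T.depthV

/-- The descendants of a vertex `u` (including `u` itself). -/
def desc (T : RTree V) (u : V) : Set V := {w | ∃ n : ℕ, T.parent^[n] w = u}

/-- The number of children of a vertex. -/
noncomputable def childCount (T : RTree V) (u : V) : ℕ :=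
  {w : V | T.parent w = u ∧ w ≠ u}.ncard

/-- A rooted tree is a rooted path if every vertex has at most one child. -/
def IsRootedPath (T : RTree V) : Prop := ∀ u : V, T.childCount u ≤ 1

/-- `a` is a strict ancestor of `v`. -/
def IsStrictAncestor (T : RTree V) (a v : V) : Prop :=
  a ≠ v ∧ ∃ n : ℕ, T.parent^[n] v = a

/-- A branch of `T` consists of a vertex `u`, exactly one child `u'` of `u` and all
descendants of `u'`; it is hence determined by the non-root vertex `u'` and denoted
here by `u'`.  Its root is `parent u'`, its vertex set is `{parent u'} ∪ desc u'`, and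
its edge number `‖S‖` is `(desc u').ncard`.  The branch determined by `u'` is primary
if its root has at least two children and every (strict) ancestor of its root has
exactly one child. -/
def IsPrimaryBranch (T : RTree V) (u' : V) : Prop :=
  u' ≠ T.root ∧ 2 ≤ T.childCount (T.parent u') ∧
    ∀ a : V, T.IsStrictAncestor a (T.parent u') → T.childCount a = 1

end RTree

/-- `(T, f)` is a depth-decomposition of the matroid on ground set `X` with rank
function `rk` and rank `r`: `f` maps elements of the matroid to leaves of `T`, the
number of edges of `T` equals the rank `r` of the matroid, and the rank of every
`X' ⊆ X` is at most the number of edges contained in the union of the paths in `T`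
from the root to the vertices `f x`, `x ∈ X'`. -/
def IsDepthDecompOn {X V : Type} [Fintype V] [DecidableEq V]
    (rk : Set X → ℕ) (r : ℕ) (T : RTree V) (f : X → V) : Prop :=
  (∀ x : X, T.IsLeaf (f x)) ∧ T.edgeCount = r ∧
    ∀ X' : Set X, rk X' ≤ (⋃ x ∈ X', T.pathEdges (f x)).ncard

/-- The branch-depth of the matroid on ground set `X` with rank function `rk` and
rank `r`: the smallest depth of a rooted tree forming a depth-decomposition. -/
noncomputable def branchDepth {X : Type} (rk : Set X → ℕ) (r : ℕ) : ℕ :=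
  sInf {d : ℕ | ∃ (nV : ℕ) (T : RTree (Fin (nV + 1))) (f : X → Fin (nV + 1)),
    IsDepthDecompOn rk r T f ∧ T.depth = d}

/-- The branch of `T` determined by the non-root vertex `u'` is at capacity: the rank
of the set `Ŝ` of matroid elements mapped by `f` to the leaves of the branch equals the
number `‖S‖` of edges of the branch plus the number of edges on the path from the root
of `T` to the root of the branch. -/
def AtCapacity {X V : Type} [Fintype V] [DecidableEq V]
    (rk : Set X → ℕ) (T : RTree V) (f : X → V) (u' : V) : Prop :=
  rk {x | f x ∈ T.desc u'} = (T.desc u').ncard + T.depthV (T.parent u')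

/-- The rank function of the vector matroid formed by the family of vectors `v`:
the rank of a subset is the dimension of its linear hull. -/
noncomputable def vecRk (F : Type) {W ι : Type} [Field F] [AddCommGroup W] [Module F W]
    (v : ι → W) (S : Set ι) : ℕ :=
  Module.finrank F (Submodule.span F (v '' S))

/-- `(T, f, g)` is an extended depth-decomposition of the vector matroid formed by the
family of vectors `v`: `(T, f)` is a depth-decomposition, the images under `g` of the
non-root vertices of `T` form a basis of the linear hull of the vectors, and every
vector `v x` lies in the linear hull of the `g`-image of the non-root vertices on the
path from `f x` to the root. -/
def IsExtDepthDecomp (F : Type) {W ι V : Type} [Field F] [AddCommGroup W] [Module F W]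
    [Fintype V] [DecidableEq V] (v : ι → W) (T : RTree V) (f : ι → V) (g : V → W) : Prop :=
  IsDepthDecompOn (vecRk F v) (vecRk F v Set.univ) T f ∧
  LinearIndependent F (fun u : {u : V // u ≠ T.root} => g u.val) ∧
  Submodule.span F (g '' {u : V | u ≠ T.root}) = Submodule.span F (Set.range v) ∧
  ∀ x : ι, v x ∈ Submodule.span F (g '' T.pathEdges (f x))

/-- The rank function of the vector matroid formed by the columns of a matrix `A`. -/
noncomputable def matRk {F : Type} [Field F] {m n : ℕ} (A : Matrix (Fin m) (Fin n) F)
    (S : Set (Fin n)) : ℕ :=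
  vecRk F (fun j => A.transpose j) S

/-- The branch-depth of a matrix `A`: the branch-depth of the vector matroid formed by
the columns of `A`. -/
noncomputable def matBranchDepth {F : Type} [Field F] {m n : ℕ}
    (A : Matrix (Fin m) (Fin n) F) : ℕ :=
  branchDepth (matRk A) (matRk A Set.univ)

/-- The dual graph of a matrix `A`: vertices are the rows of `A`, two distinct rows
being adjacent if some column of `A` has a non-zero entry in both of them. -/
def dualGraph {F : Type} [Field F] {m n : ℕ} (A : Matrix (Fin m) (Fin n) F) :
    SimpleGraph (Fin m) where
  Adj i i' := i ≠ i' ∧ ∃ j : Fin n, A i j ≠ 0 ∧ A i' j ≠ 0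
  symm := by
    constructor
    rintro i i' ⟨h1, j, h2, h3⟩
    exact ⟨h1.symm, j, h3, h2⟩
  loopless := ⟨fun i h => h.1 rfl⟩

/-- A rooted forest on a finite vertex type `V`, given by its parent function: the roots
are the fixed points of the parent function, and iterating the parent function from any
vertex reaches a root. -/
structure RForest (V : Type) [Fintype V] [DecidableEq V] where
  parent : V → V
  reach : ∀ v : V, ∃ n : ℕ, parent (parent^[n] v) = parent^[n] v

namespace RForest

variable {V : Type} [Fintype V] [DecidableEq V]

/-- The depth of a vertex: the number of edges on the path from the root of its tree. -/
noncomputable def depthV (Fo : RForest V) (v : V) : ℕ :=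
  sInf {n : ℕ | Fo.parent (Fo.parent^[n] v) = Fo.parent^[n] v}

/-- The height of a rooted forest: the maximum number of vertices on a path from a root
to a leaf. -/
noncomputable def height (Fo : RForest V) : ℕ :=
  Finset.univ.sup fun v => Fo.depthV v + 1

/-- The closure of the rooted forest `Fo` (obtained by adding edges from each vertex to
all its descendants) contains the graph `G` as a subgraph. -/
def ClosureContains (Fo : RForest V) (G : SimpleGraph V) : Prop :=
  ∀ u v : V, G.Adj u v → (∃ n : ℕ, Fo.parent^[n] v = u) ∨ (∃ n : ℕ, Fo.parent^[n] u = v)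

end RForest

/-- The tree-depth of a graph `G`: the minimum height of a rooted forest whose closure
contains `G` as a subgraph. -/
noncomputable def treeDepth {V : Type} [Fintype V] [DecidableEq V] (G : SimpleGraph V) : ℕ :=
  sInf {h : ℕ | ∃ Fo : RForest V, Fo.ClosureContains G ∧ Fo.height = h}

/-! Let `Fo` be a rooted forest whose closure contains the dual graph of `A`, and let `R` be a set
of `rank A` rows spanning the row space. Contracting `Fo` onto `R` (every row of `R` hangs below
its nearest ancestor in `R`, the topmost ones below a new root) gives a tree with `rank A` edges
and depth at most the height of `Fo`. The support of a column is a clique of the dual graph, hence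
a chain of `Fo`, so the column can be sent to a leaf below the deepest of its rows in `R`.
A vector in the column space vanishing on `R` vanishes, because the rows of `R` span all rows;
so the columns of a set `X` have rank at most the number of rows of `R` on which some column of
`X` is nonzero, and these rows are edges on the paths of `X`. -/

namespace RForest

variable {V : Type} [Fintype V] [DecidableEq V] (Fo : RForest V)

def IsAncestor (a b : V) : Prop := ∃ n : ℕ, Fo.parent^[n] b = a

variable {Fo} in
lemma IsAncestor.refl (v : V) : Fo.IsAncestor v v := ⟨0, rfl⟩

lemma parent_iterate_depthV (v : V) :
    Fo.parent (Fo.parent^[Fo.depthV v] v) = Fo.parent^[Fo.depthV v] v :=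
  Nat.sInf_mem (Fo.reach v)

lemma parent_iterate_of_depthV_le {v : V} {n : ℕ} (h : Fo.depthV v ≤ n) :
    Fo.parent^[n] v = Fo.parent^[Fo.depthV v] v := by
  obtain ⟨k, rfl⟩ := Nat.exists_eq_add_of_le h
  rw [add_comm, Function.iterate_add_apply]
  exact Function.iterate_fixed (Fo.parent_iterate_depthV v) k

lemma depthV_parent_iterate_le (v : V) (k : ℕ) :
    Fo.depthV (Fo.parent^[k] v) ≤ Fo.depthV v - k := by
  apply Nat.sInf_le
  change Fo.parent (Fo.parent^[_] _) = _
  rw [← Function.iterate_add_apply, Fo.parent_iterate_of_depthV_le (by omega)]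
  exact Fo.parent_iterate_depthV v

lemma depthV_lt_of_isAncestor {a b : V} (h : Fo.IsAncestor a b) (hne : a ≠ b) :
    Fo.depthV a < Fo.depthV b := by
  obtain ⟨k, rfl⟩ := h
  have hk : k ≠ 0 := by rintro rfl; exact hne rfl
  have hb : Fo.depthV b ≠ 0 := fun hb => by
    have hfix : Fo.parent b = b := by simpa [hb] using Fo.parent_iterate_depthV b
    exact hne (Function.iterate_fixed hfix k)
  have := Fo.depthV_parent_iterate_le b k
  omega

lemma exists_forall_isAncestor {s : Finset V} (hs : s.Nonempty)
    (hchain : ∀ a ∈ s, ∀ b ∈ s, Fo.IsAncestor a b ∨ Fo.IsAncestor b a) :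
    ∃ v ∈ s, ∀ a ∈ s, Fo.IsAncestor a v := by
  obtain ⟨v, hv, hmax⟩ := s.exists_max_image Fo.depthV hs
  refine ⟨v, hv, fun a ha => (hchain a ha v hv).elim id fun hva => ?_⟩
  by_cases heq : v = a
  · exact heq ▸ .refl v
  · exact absurd (hmax a ha) (Fo.depthV_lt_of_isAncestor hva heq).not_ge

lemma exists_closureContains {m : ℕ} (G : SimpleGraph (Fin m)) :
    ∃ Fo : RForest (Fin m), Fo.ClosureContains G := by
  let p : Fin m → Fin m := fun i => ⟨i - 1, by omega⟩
  have hp : ∀ k (i : Fin m), (p^[k] i : ℕ) = i - k := by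
    intro k
    induction k with
    | zero => simp
    | succ k ih =>
      intro i
      rw [Function.iterate_succ_apply']
      change (p^[k] i : ℕ) - 1 = i - (k + 1)
      rw [ih]
      omega
  refine ⟨⟨p, fun v => ⟨v, Fin.ext ?_⟩⟩, fun u v _ => ?_⟩
  · change (p^[v] v : ℕ) - 1 = p^[v] v
    rw [hp]
    omega
  · rcases le_total (u : ℕ) v with h | h
    · exact .inl ⟨v - u, Fin.ext (by rw [hp]; omega)⟩
    · exact .inr ⟨u - v, Fin.ext (by rw [hp]; omega)⟩

open Classical in
noncomputable def nearestAncestorIn (R : Finset V) (v : V) : Option R :=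
  if h : ∃ k, Fo.parent^[k] v ∈ R ∧ Fo.parent^[k] v ≠ v then
    some ⟨Fo.parent^[Nat.find h] v, (Nat.find_spec h).1⟩
  else none

lemma isAncestor_of_nearestAncestorIn_eq_some {R : Finset V} {v : V} {r : R}
    (h : Fo.nearestAncestorIn R v = some r) : Fo.IsAncestor r v ∧ (r : V) ≠ v := by
  classical
  unfold nearestAncestorIn at h
  split_ifs at h with hex
  cases h
  exact ⟨⟨_, rfl⟩, (Nat.find_spec hex).2⟩

lemma exists_nearestAncestorIn_eq_some {R : Finset V} {a v : V} (ha : a ∈ R)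
    (hav : Fo.IsAncestor a v) (hne : a ≠ v) :
    ∃ r, Fo.nearestAncestorIn R v = some r ∧ Fo.IsAncestor a r := by
  classical
  obtain ⟨k, rfl⟩ := hav
  have hex : ∃ k, Fo.parent^[k] v ∈ R ∧ Fo.parent^[k] v ≠ v := ⟨k, ha, hne⟩
  refine ⟨_, dif_pos hex, k - Nat.find hex, ?_⟩
  rw [← Function.iterate_add_apply, Nat.sub_add_cancel (Nat.find_min' hex ⟨ha, hne⟩)]

end RForest

lemma Option.iterate_bind_eq_none {α : Type} (p : α → Option α) (μ : α → ℕ)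
    (hμ : ∀ a b, p a = some b → μ b < μ a) (a : α) :
    (fun o : Option α => o.bind p)^[μ a + 1] (some a) = none := by
  have hnone : ∀ k, (fun o : Option α => o.bind p)^[k] none = none :=
    Function.iterate_fixed rfl
  rw [Function.iterate_succ_apply, Option.bind_some]
  cases hb : p a with
  | none => exact hnone _
  | some b =>
    have hlt := hμ a b hb
    obtain ⟨k, hk⟩ := Nat.exists_eq_add_of_lt hlt
    rw [hk, show μ b + k + 1 = k + (μ b + 1) by omega, Function.iterate_add_apply,
      Option.iterate_bind_eq_none p μ hμ b, hnone]
termination_by μ a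
decreasing_by exact hlt

namespace RTree

variable {V : Type} [Fintype V] [DecidableEq V] (T : RTree V)

def IsAncestor (a b : V) : Prop := ∃ n : ℕ, T.parent^[n] b = a

variable {T}

lemma IsAncestor.refl (v : V) : T.IsAncestor v v := ⟨0, rfl⟩

lemma IsAncestor.trans {a b c : V} (hab : T.IsAncestor a b) (hbc : T.IsAncestor b c) :
    T.IsAncestor a c := by
  obtain ⟨k, rfl⟩ := hab
  obtain ⟨l, rfl⟩ := hbc
  exact ⟨k + l, Function.iterate_add_apply _ _ _ _⟩

lemma IsAncestor.of_parent {a b : V} (h : T.IsAncestor a (T.parent b)) : T.IsAncestor a b := by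
  obtain ⟨k, rfl⟩ := h
  exact ⟨k + 1, rfl⟩

lemma mem_pathEdges_of_isAncestor {a v : V} (ha : a ≠ T.root) (h : T.IsAncestor a v) :
    a ∈ T.pathEdges v :=
  ⟨ha, h⟩

variable (T)

lemma parent_iterate_depthV (v : V) : T.parent^[T.depthV v] v = T.root :=
  Nat.sInf_mem (T.reach v)

lemma depthV_lt_of_parent_eq {u w : V} (hw : T.parent w = u) (hne : w ≠ u) :
    T.depthV u < T.depthV w := by
  obtain ⟨d, hd⟩ : ∃ d, T.depthV w = d + 1 := by
    refine Nat.exists_eq_succ_of_ne_zero fun h0 => hne ?_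
    have hroot : w = T.root := by simpa [h0] using T.parent_iterate_depthV w
    rw [← hw, hroot, T.parent_root]
  have hu : T.parent^[d] u = T.root := by
    rw [← hw, ← Function.iterate_succ_apply, Nat.succ_eq_add_one, ← hd,
      T.parent_iterate_depthV]
  have := Nat.sInf_le (s := {n | T.parent^[n] u = T.root}) hu
  change T.depthV u ≤ d at this
  omega

lemma exists_isLeaf_isAncestor (v : V) : ∃ u, T.IsLeaf u ∧ T.IsAncestor v u := by
  obtain ⟨u, hvu, hmax⟩ := Set.Finite.exists_maximalFor T.depthV {u | T.IsAncestor v u}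
    (Set.toFinite _) ⟨v, IsAncestor.refl v⟩
  refine ⟨u, fun w hw => by_contra fun hne => ?_, hvu⟩
  have hlt := T.depthV_lt_of_parent_eq hw hne
  have := hmax (hvu.trans ⟨1, hw⟩) hlt.le
  omega

section OfOption

variable {α : Type} [Fintype α] [DecidableEq α] (p : α → Option α) (μ : α → ℕ)
  (hμ : ∀ a b, p a = some b → μ b < μ a)

/-- `μ` only certifies that iterating `p` reaches `none`. -/
def ofOption : RTree (Option α) where
  root := none
  parent o := o.bind p
  parent_root := rfl
  reach
    | none => ⟨0, rfl⟩
    | some a => ⟨_, Option.iterate_bind_eq_none p μ hμ a⟩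

lemma ofOption_depthV_some_le (a : α) :
    (ofOption p μ hμ).depthV (some a) ≤ μ a + 1 :=
  Nat.sInf_le (Option.iterate_bind_eq_none p μ hμ a)

lemma ofOption_depthV_none :
    (ofOption p μ hμ).depthV none = 0 :=
  Nat.le_zero.1 (Nat.sInf_le (show (ofOption p μ hμ).parent^[0] none = none from rfl))

end OfOption

section Relabel

variable {V W : Type} [Fintype V] [DecidableEq V] [Fintype W] [DecidableEq W]

def relabel (T : RTree V) (e : V ≃ W) : RTree W where
  root := e T.root
  parent := e.conj T.parent
  parent_root := by simp [T.parent_root]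
  reach w := (T.reach (e.symm w)).imp fun n hn => by
    rw [← e.apply_symm_apply w, ← (e.semiconj_conj T.parent).iterate_right n, hn]

variable (T : RTree V) (e : V ≃ W)

lemma relabel_root : (T.relabel e).root = e T.root :=
  rfl

lemma relabel_parent_iterate (n : ℕ) (v : V) :
    (T.relabel e).parent^[n] (e v) = e (T.parent^[n] v) :=
  ((e.semiconj_conj T.parent).iterate_right n v).symm

lemma relabel_isLeaf {v : V} (h : T.IsLeaf v) : (T.relabel e).IsLeaf (e v) := fun u hu => by
  rw [← e.apply_symm_apply u, h (e.symm u) (e.injective hu)]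

lemma relabel_pathEdges (v : V) : (T.relabel e).pathEdges (e v) = e '' T.pathEdges v := by
  ext w
  obtain ⟨u, rfl⟩ := e.surjective w
  simp only [pathEdges, relabel_parent_iterate, e.injective.mem_set_image,
    Set.mem_ofPred_eq, relabel_root, e.injective.eq_iff, ne_eq]

lemma relabel_depth : (T.relabel e).depth = T.depth := by
  have hdepthV : ∀ v, (T.relabel e).depthV (e v) = T.depthV v := fun v => by
    simp only [depthV, relabel_parent_iterate, relabel_root, e.injective.eq_iff]
  unfold depth
  rw [← Finset.image_univ_equiv e, Finset.sup_image]
  exact Finset.sup_congr rfl fun v _ => hdepthV v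

end Relabel

end RTree

theorem branchDepth_le_depth {X V : Type} [Fintype V] [DecidableEq V] {rk : Set X → ℕ} {r : ℕ}
    {T : RTree V} {f : X → V} (h : IsDepthDecompOn rk r T f) : branchDepth rk r ≤ T.depth := by
  obtain ⟨hleaf, hedge, hrank⟩ := h
  have hcard : Fintype.card V = r + 1 := by
    have := Fintype.card_pos_iff.2 ⟨T.root⟩
    unfold RTree.edgeCount at hedge
    omega
  let e : V ≃ Fin (r + 1) := Fintype.equivFinOfCardEq hcard
  refine Nat.sInf_le ⟨r, T.relabel e, e ∘ f,
    ⟨fun x => T.relabel_isLeaf e (hleaf x), ?_, fun X' => ?_⟩, T.relabel_depth e⟩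
  · simp [RTree.edgeCount]
  · simp only [Function.comp_apply, RTree.relabel_pathEdges, ← Set.image_iUnion₂,
      Set.ncard_image_of_injective _ e.injective]
    exact hrank X'

namespace RForest

variable {V : Type} [Fintype V] [DecidableEq V] (Fo : RForest V)

noncomputable def compress (R : Finset V) : RTree (Option R) :=
  RTree.ofOption (fun r : R => Fo.nearestAncestorIn R r) (fun r => Fo.depthV r) fun _ _ h =>
    Fo.depthV_lt_of_isAncestor (Fo.isAncestor_of_nearestAncestorIn_eq_some h).1
      (Fo.isAncestor_of_nearestAncestorIn_eq_some h).2

lemma compress_parent_some (R : Finset V) (r : R) :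
    (Fo.compress R).parent (some r) = Fo.nearestAncestorIn R r :=
  rfl

lemma compress_isAncestor {R : Finset V} {a b : R} (h : Fo.IsAncestor a b) :
    (Fo.compress R).IsAncestor (some a) (some b) := by
  by_cases hab : (a : V) = b
  · rw [Subtype.ext hab]
    exact .refl _
  obtain ⟨r, hr, har⟩ := Fo.exists_nearestAncestorIn_eq_some a.2 h hab
  have hlt := Fo.depthV_lt_of_isAncestor (Fo.isAncestor_of_nearestAncestorIn_eq_some hr).1
    (Fo.isAncestor_of_nearestAncestorIn_eq_some hr).2
  exact .of_parent (by rw [compress_parent_some, hr]; exact compress_isAncestor har)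
termination_by Fo.depthV b
decreasing_by exact hlt

lemma compress_depth_le_height (R : Finset V) : (Fo.compress R).depth ≤ Fo.height := by
  refine Finset.sup_le fun v _ => ?_
  cases v with
  | none => simp [compress, RTree.ofOption_depthV_none]
  | some r =>
    exact (RTree.ofOption_depthV_some_le _ _ _ r).trans
      (Finset.le_sup (f := fun v => Fo.depthV v + 1) (Finset.mem_univ _))

end RForest

namespace Matrix

open Submodule

variable {ι κ F : Type*} [Field F] [Fintype κ]

lemma eq_zero_of_mem_span_col {A : Matrix ι κ F} {R : Set ι}
    (hR : span F (A.row '' R) = span F (Set.range A.row)) {v : ι → F}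
    (hv : v ∈ span F (Set.range A.col)) (hvR : ∀ i ∈ R, v i = 0) : v = 0 := by
  rw [← range_mulVecLin] at hv
  obtain ⟨c, rfl⟩ := hv
  let φ : (κ → F) →ₗ[F] F := (dotProductBilin F F).flip c
  have hrows : span F (Set.range A.row) ≤ LinearMap.ker φ := by
    rw [← hR, span_le]
    rintro _ ⟨i, hi, rfl⟩
    exact hvR i hi
  funext i
  exact hrows (subset_span ⟨i, rfl⟩)

lemma finrank_span_col_le_ncard [Finite ι] {A : Matrix ι κ F} {R S : Set ι}
    (hR : span F (A.row '' R) = span F (Set.range A.row)) {X : Set κ}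
    (hS : ∀ j ∈ X, ∀ i ∈ R, A i j ≠ 0 → i ∈ S) :
    Module.finrank F (span F (A.col '' X)) ≤ S.ncard := by
  have : Fintype S := Fintype.ofFinite S
  let π : span F (A.col '' X) →ₗ[F] (S → F) :=
    (LinearMap.funLeft F F ((↑) : S → ι)).comp (Submodule.subtype _)
  have hπ : Function.Injective π := by
    refine (injective_iff_map_eq_zero π).2 fun ⟨v, hv⟩ hπv => Subtype.ext ?_
    refine eq_zero_of_mem_span_col hR (span_mono (Set.image_subset_range _ _) hv) fun i hi => ?_
    by_cases hiS : i ∈ S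
    · exact congrFun hπv ⟨i, hiS⟩
    · have hcol : span F (A.col '' X) ≤ LinearMap.ker (LinearMap.proj i) := by
        rw [span_le]
        rintro _ ⟨j, hj, rfl⟩
        exact not_not.1 fun hij => hiS (hS j hj i hi hij)
      exact hcol hv
  calc Module.finrank F (span F (A.col '' X)) ≤ Module.finrank F (S → F) :=
        LinearMap.finrank_le_finrank_of_injective hπ
    _ = S.ncard := by
      rw [Module.finrank_fintype_fun_eq_card, Set.ncard_eq_toFinset_card', Set.toFinset_card]

lemma exists_finset_span_row_eq [Fintype ι] (A : Matrix ι κ F) :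
    ∃ R : Finset ι, R.card = A.rank ∧ span F (A.row '' R) = span F (Set.range A.row) := by
  classical
  obtain ⟨b, -, -, hspan, hli⟩ :=
    exists_linearIndepOn_extension (linearIndepOn_empty F A.row) (Set.empty_subset Set.univ)
  have hspan_eq : span F (A.row '' b) = span F (Set.range A.row) :=
    le_antisymm (span_mono (Set.image_subset_range _ _)) (span_le.2 (Set.image_univ ▸ hspan))
  refine ⟨b.toFinset, ?_, by rwa [Set.coe_toFinset]⟩
  rw [rank_eq_finrank_span_row, ← hspan_eq, Set.image_eq_range, finrank_span_eq_card hli,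
    Set.toFinset_card]

end Matrix

section DualGraph

open Submodule

variable {F : Type} [Field F] {m n : ℕ} {A : Matrix (Fin m) (Fin n) F}

lemma matRk_univ (A : Matrix (Fin m) (Fin n) F) : matRk A Set.univ = A.rank := by
  rw [matRk, vecRk, Set.image_univ, Matrix.rank_eq_finrank_span_cols]
  rfl

lemma isDepthDecompOn_of_mem_pathEdges {R : Finset (Fin m)} (hRcard : R.card = A.rank)
    (hR : span F (A.row '' R) = span F (Set.range A.row)) (T : RTree (Option R))
    {f : Fin n → Option R} (hleaf : ∀ j, T.IsLeaf (f j))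
    (hpath : ∀ j (r : R), A r j ≠ 0 → some r ∈ T.pathEdges (f j)) :
    IsDepthDecompOn (matRk A) (matRk A Set.univ) T f := by
  refine ⟨hleaf, by simp [RTree.edgeCount, hRcard, matRk_univ], fun X => ?_⟩
  set U := ⋃ j ∈ X, T.pathEdges (f j)
  calc matRk A X ≤ (Subtype.val '' (some ⁻¹' U : Set R)).ncard :=
        A.finrank_span_col_le_ncard hR fun j hj i hi hij =>
          ⟨⟨i, hi⟩, Set.mem_biUnion hj (hpath j ⟨i, hi⟩ hij), rfl⟩
    _ = (some ⁻¹' U : Set R).ncard := Set.ncard_image_of_injective _ Subtype.val_injective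
    _ ≤ U.ncard := Set.ncard_le_ncard_of_injOn some (fun _ h => h) (Option.some_injective _).injOn

variable {Fo : RForest (Fin m)}

lemma RForest.ClosureContains.isAncestor_or_isAncestor (hFo : Fo.ClosureContains (dualGraph A))
    {i i' : Fin m} {j : Fin n} (hi : A i j ≠ 0) (hi' : A i' j ≠ 0) :
    Fo.IsAncestor i i' ∨ Fo.IsAncestor i' i := by
  by_cases h : i = i'
  · exact .inl (h ▸ .refl i)
  · exact hFo i i' ⟨h, j, hi, hi'⟩

lemma RForest.ClosureContains.exists_isLeaf_above_col (hFo : Fo.ClosureContains (dualGraph A))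
    (R : Finset (Fin m)) (j : Fin n) :
    ∃ ℓ, (Fo.compress R).IsLeaf ℓ ∧
      ∀ r : R, A r j ≠ 0 → some r ∈ (Fo.compress R).pathEdges ℓ := by
  classical
  set s := R.filter (A · j ≠ 0)
  have hmem : ∀ r : R, A r j ≠ 0 → (r : Fin m) ∈ s := fun r hr =>
    Finset.mem_filter.2 ⟨r.2, hr⟩
  obtain ⟨v, hv⟩ : ∃ v, ∀ r : R, A r j ≠ 0 → (Fo.compress R).IsAncestor (some r) v := by
    rcases s.eq_empty_or_nonempty with hs | hs
    · exact ⟨none, fun r hr => absurd (hmem r hr) (by simp [hs])⟩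
    · obtain ⟨v, hv, hvmax⟩ := Fo.exists_forall_isAncestor hs fun a ha b hb =>
        hFo.isAncestor_or_isAncestor (Finset.mem_filter.1 ha).2 (Finset.mem_filter.1 hb).2
      exact ⟨some ⟨v, (Finset.mem_filter.1 hv).1⟩, fun r hr =>
        Fo.compress_isAncestor (hvmax r (hmem r hr))⟩
  obtain ⟨ℓ, hℓ, hvℓ⟩ := (Fo.compress R).exists_isLeaf_isAncestor v
  exact ⟨ℓ, hℓ, fun r hr =>
    RTree.mem_pathEdges_of_isAncestor (Option.some_ne_none r) ((hv r hr).trans hvℓ)⟩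

end DualGraph

/-- Proposition: `bd(A) ≤ td_D(A)`. The branch-depth of an `m × n`
matrix over a field is at most its dual tree-depth. -/
theorem branchDepth_le_dual_treeDepth (F : Type) [Field F] (m n : ℕ)
    (A : Matrix (Fin m) (Fin n) F) :
    matBranchDepth A ≤ treeDepth (dualGraph A) := by
  obtain ⟨Fo₀, hFo₀⟩ := RForest.exists_closureContains (dualGraph A)
  refine le_csInf ⟨_, Fo₀, hFo₀, rfl⟩ ?_
  rintro _ ⟨Fo, hFo, rfl⟩
  obtain ⟨R, hRcard, hR⟩ := A.exists_finset_span_row_eq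
  choose f hleaf hpath using hFo.exists_isLeaf_above_col R
  calc matBranchDepth A ≤ (Fo.compress R).depth :=
        branchDepth_le_depth (isDepthDecompOn_of_mem_pathEdges hRcard hR _ hleaf hpath)
    _ ≤ Fo.height := Fo.compress_depth_le_height R
end

section
/- Let (T, f) be a depth-decomposition of a vector matroid M = (X, I) of rank r, and let S be a primary branch of T whose root is the root of T. Then the rank of Ŝ equals ‖S‖, i.e., S is at capacity. Consequently, if T has a primary branch that is not at capacity, then the root of that branch is not the root of T (and the root of T has a single child). -/
/-! Let `D` be the set of edges of the branch and `N` the set of all edges, so `|N| = r`.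
Since the root of the branch is the root of `T`, the root paths of leaves of the branch
lie in `D`, and those of all other leaves lie in `N \ D`. The depth-decomposition
inequality thus bounds the rank of `Ŝ` by `|D|` and that of its complement by `r - |D|`;
by subadditivity of the rank both bounds are attained. -/

namespace RTree

variable {V : Type} [Fintype V] [DecidableEq V] (T : RTree V)

lemma iterate_parent_root (n : ℕ) : T.parent^[n] T.root = T.root :=
  Function.iterate_fixed T.parent_root n

lemma depthV_root : T.depthV T.root = 0 :=
  Nat.sInf_eq_zero.mpr (Or.inl rfl)

lemma ncard_ne_root : {w : V | w ≠ T.root}.ncard = T.edgeCount := by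
  rw [← Set.compl_singleton_eq, Set.ncard_compl, Set.ncard_singleton, Nat.card_eq_fintype_card,
    edgeCount]

variable {T}

lemma desc_subset_ne_root {u : V} (hu : u ≠ T.root) : T.desc u ⊆ {w : V | w ≠ T.root} := by
  rintro w ⟨n, rfl⟩ rfl
  exact hu (T.iterate_parent_root n)

lemma pathEdges_subset_desc {u x : V} (hroot : T.parent u = T.root) (hx : x ∈ T.desc u) :
    T.pathEdges x ⊆ T.desc u := by
  obtain ⟨m, hm⟩ := hx
  rintro w ⟨hw, n, rfl⟩
  rcases le_or_gt n m with hnm | hmn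
  · exact ⟨m - n, by rw [← Function.iterate_add_apply, Nat.sub_add_cancel hnm, hm]⟩
  · refine absurd ?_ hw
    obtain ⟨k, rfl⟩ := Nat.exists_eq_add_of_lt hmn
    rw [add_assoc, add_comm, Function.iterate_add_apply, hm, Function.iterate_succ_apply,
      hroot, iterate_parent_root]

lemma pathEdges_subset_diff_desc {u x : V} (hx : x ∉ T.desc u) :
    T.pathEdges x ⊆ {w : V | w ≠ T.root} \ T.desc u := by
  rintro w ⟨hw, n, rfl⟩
  refine ⟨hw, fun ⟨k, hk⟩ => hx ⟨k + n, ?_⟩⟩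
  rw [Function.iterate_add_apply, hk]

lemma isStrictAncestor_root {u : V} (hu : u ≠ T.root) : T.IsStrictAncestor T.root u :=
  ⟨hu.symm, T.reach u⟩

lemma IsPrimaryBranch.childCount_root {u' : V} (hpb : T.IsPrimaryBranch u')
    (hroot : T.parent u' ≠ T.root) : T.childCount T.root = 1 :=
  hpb.2.2 _ (isStrictAncestor_root hroot)

end RTree

section DepthDecomp

variable {X V : Type} [Fintype V] [DecidableEq V] {rk : Set X → ℕ} {r : ℕ} {T : RTree V}
  {f : X → V}

lemma atCapacity_iff_of_parent_eq_root {u' : V} (hroot : T.parent u' = T.root) :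
    AtCapacity rk T f u' ↔ rk {x | f x ∈ T.desc u'} = (T.desc u').ncard := by
  rw [AtCapacity, hroot, T.depthV_root, add_zero]

lemma IsDepthDecompOn.rk_le_ncard (hdd : IsDepthDecompOn rk r T f) {A : Set X} {E : Set V}
    (hA : ∀ x ∈ A, T.pathEdges (f x) ⊆ E) : rk A ≤ E.ncard :=
  (hdd.2.2 A).trans (Set.ncard_le_ncard (Set.iUnion₂_subset hA))

theorem IsDepthDecompOn.rk_branch_eq_ncard_of_parent_eq_root
    (hdd : IsDepthDecompOn rk r T f) (hr : rk Set.univ = r)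
    (hsub : ∀ A B : Set X, rk (A ∪ B) ≤ rk A + rk B) {u' : V} (hne : u' ≠ T.root)
    (hroot : T.parent u' = T.root) :
    rk {x | f x ∈ T.desc u'} = (T.desc u').ncard := by
  set A := {x | f x ∈ T.desc u'}
  have hDN := RTree.desc_subset_ne_root hne
  have hN : {w : V | w ≠ T.root}.ncard = r := T.ncard_ne_root.trans hdd.2.1
  have hD : (T.desc u').ncard ≤ r := hN ▸ Set.ncard_le_ncard hDN
  have hA : rk A ≤ (T.desc u').ncard :=
    hdd.rk_le_ncard fun x hx => RTree.pathEdges_subset_desc hroot hx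
  have hAc : rk Aᶜ ≤ r - (T.desc u').ncard := by
    rw [← hN, ← Set.ncard_sdiff hDN]
    exact hdd.rk_le_ncard fun x hx => RTree.pathEdges_subset_diff_desc hx
  have htotal : r ≤ rk A + rk Aᶜ := by
    simpa only [Set.union_compl_self, hr] using hsub A Aᶜ
  omega

end DepthDecomp

lemma vecRk_union_le (F : Type) {W ι : Type} [Field F] [AddCommGroup W] [Module F W]
    (v : ι → W) (A B : Set ι) : vecRk F v (A ∪ B) ≤ vecRk F v A + vecRk F v B := by
  rw [vecRk, vecRk, vecRk, Set.image_union, Submodule.span_union]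
  set s := Submodule.span F (v '' A)
  set t := Submodule.span F (v '' B)
  by_cases hfin : FiniteDimensional F ↥(s ⊔ t)
  · have : FiniteDimensional F s := Submodule.finiteDimensional_of_le (le_sup_left : s ≤ s ⊔ t)
    have : FiniteDimensional F t := Submodule.finiteDimensional_of_le (le_sup_right : t ≤ s ⊔ t)
    exact Submodule.finrank_add_le_finrank_add_finrank s t
  · rw [Module.finrank_of_not_finite hfin]
    exact Nat.zero_le _

theorem primary_branch_at_root_atCapacity_general (F W ι : Type) [Field F] [AddCommGroup W]
    [Module F W] (v : ι → W) {V : Type} [Fintype V] [DecidableEq V]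
    (T : RTree V) (f : ι → V) (r : ℕ) (hr : vecRk F v Set.univ = r)
    (hdd : IsDepthDecompOn (vecRk F v) r T f) :
    (∀ u' : V, T.IsPrimaryBranch u' → T.parent u' = T.root →
      vecRk F v {x | f x ∈ T.desc u'} = (T.desc u').ncard ∧
        AtCapacity (vecRk F v) T f u') ∧
    (∀ u' : V, T.IsPrimaryBranch u' → ¬ AtCapacity (vecRk F v) T f u' →
      T.parent u' ≠ T.root ∧ T.childCount T.root = 1) := by
  have hbranch : ∀ u' : V, T.IsPrimaryBranch u' → T.parent u' = T.root →
      vecRk F v {x | f x ∈ T.desc u'} = (T.desc u').ncard := fun u' hpb hroot =>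
    hdd.rk_branch_eq_ncard_of_parent_eq_root hr (vecRk_union_le F v) hpb.1 hroot
  refine ⟨fun u' hpb hroot => ⟨hbranch u' hpb hroot,
    (atCapacity_iff_of_parent_eq_root hroot).2 (hbranch u' hpb hroot)⟩, fun u' hpb hcap => ?_⟩
  have hne : T.parent u' ≠ T.root := fun hroot =>
    hcap ((atCapacity_iff_of_parent_eq_root hroot).2 (hbranch u' hpb hroot))
  exact ⟨hne, hpb.childCount_root hne⟩

/-- primary branches rooted at the root are at capacity. Let `(T, f)`
be a depth-decomposition of a vector matroid of rank `r` and let `S` be a primary branch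
of `T` whose root is the root of `T`.  Then the rank of `Ŝ` equals `‖S‖`, i.e. `S` is at
capacity.  Consequently, if `T` has a primary branch that is not at capacity, then the
root of that branch is not the root of `T` and the root of `T` has a single child. -/
theorem primary_branch_at_root_atCapacity (F W ι : Type) [Field F] [AddCommGroup W]
    [Module F W] [Fintype ι] (v : ι → W) {V : Type} [Fintype V] [DecidableEq V]
    (T : RTree V) (f : ι → V) (r : ℕ) (hr : vecRk F v Set.univ = r)
    (hdd : IsDepthDecompOn (vecRk F v) r T f) :
    (∀ u' : V, T.IsPrimaryBranch u' → T.parent u' = T.root →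
      vecRk F v {x | f x ∈ T.desc u'} = (T.desc u').ncard ∧
        AtCapacity (vecRk F v) T f u') ∧
    (∀ u' : V, T.IsPrimaryBranch u' → ¬ AtCapacity (vecRk F v) T f u' →
      T.parent u' ≠ T.root ∧ T.childCount T.root = 1) :=
  primary_branch_at_root_atCapacity_general F W ι v T f r hr hdd
end

section
/- Let (T, f) be a depth-decomposition of a vector matroid M = (X, I) such that T is not a rooted path and each primary branch of T is at capacity. Let S_1, ..., S_k be the primary branches of T, let h be the depth of their common root, let K be the h-dimensional subspace such that span(Ŝ_i) ∩ span(Ŝ_j) = K for all i < j, and let b_1, ..., b_h be a basis of K. For each i, let M_i be the matroid on ground set Ŝ_i in which a subset X' ⊆ Ŝ_i is independent if and only if X' ∪ {b_1, ..., b_h} is linearly independent, and let f_i be the restriction of f to Ŝ_i. Then (S_i, f_i) is a depth-decomposition of M_i. -/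
/-!
Let `u₂` be a second child of the root of the primary branch `S` of `u'`; it determines a
primary branch `S₂`. Since `K ≤ span Ŝ`, at capacity `dim (span Ŝ ⊔ K) = ‖S‖ + h`. For
`X' ⊆ Ŝ` the hull `A = span X' ⊔ K` meets `span Ŝ₂` exactly in `K`, so
`dim A + dim span Ŝ₂ = dim span (X' ∪ Ŝ₂) + h`. The depth-decomposition bounds the right side
by the edges on the paths from `X'` inside `S`, plus `‖S₂‖` edges of `S₂`, plus the `h` edges
above the common root; as `S₂` is at capacity, `dim A - h` is at most the first term.
-/

namespace RTree

variable {V : Type} [Fintype V] [DecidableEq V] (T : RTree V)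

lemma pathEdges_subset_of_mem_desc {u x : V} (hx : x ∈ T.desc u) :
    T.pathEdges x ⊆ {w | w ∈ T.desc u ∧ ∃ n : ℕ, T.parent^[n] x = w} ∪
      T.pathEdges (T.parent u) := by
  obtain ⟨m, hm⟩ := hx
  rintro w ⟨hwr, n, hn⟩
  rcases le_or_gt n m with hnm | hnm
  · refine Or.inl ⟨⟨m - n, ?_⟩, n, hn⟩
    rw [← hn, ← Function.iterate_add_apply, Nat.sub_add_cancel hnm, hm]
  · refine Or.inr ⟨hwr, n - m - 1, ?_⟩
    rw [← Function.iterate_succ_apply, ← hm, ← Function.iterate_add_apply]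
    rwa [show (n - m - 1).succ + m = n by omega]

lemma ncard_pathEdges_le_depthV (p : V) : (T.pathEdges p).ncard ≤ T.depthV p := by
  set d := T.depthV p
  have hroot : T.parent^[d] p = T.root := Nat.sInf_mem (T.reach p)
  have hsub : T.pathEdges p ⊆ ↑((Finset.range d).image fun n => T.parent^[n] p) := by
    rintro w ⟨hwr, n, rfl⟩
    simp only [Finset.coe_image, Finset.coe_range, Set.mem_image, Set.mem_Iio]
    refine ⟨n, ?_, rfl⟩
    by_contra! hdn
    apply hwr
    rw [← Nat.sub_add_cancel hdn, Function.iterate_add_apply, hroot,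
      Function.iterate_fixed T.parent_root]
  calc (T.pathEdges p).ncard
      ≤ (↑((Finset.range d).image fun n => T.parent^[n] p) : Set V).ncard :=
        Set.ncard_le_ncard hsub (Finset.finite_toSet _)
    _ ≤ d := by
        rw [Set.ncard_coe_finset]
        exact Finset.card_image_le.trans_eq (Finset.card_range d)

lemma ncard_biUnion_pathEdges_union_le {ι : Type} (f : ι → V) {u₁ u₂ : V}
    (hpar : T.parent u₂ = T.parent u₁) {X₁ : Set ι} (hX₁ : X₁ ⊆ {x | f x ∈ T.desc u₁}) :
    (⋃ x ∈ X₁ ∪ {x | f x ∈ T.desc u₂}, T.pathEdges (f x)).ncard ≤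
      (⋃ x ∈ X₁, {w : V | w ∈ T.desc u₁ ∧ ∃ n : ℕ, T.parent^[n] (f x) = w}).ncard +
        (T.desc u₂).ncard + T.depthV (T.parent u₁) := by
  set E := ⋃ x ∈ X₁, {w : V | w ∈ T.desc u₁ ∧ ∃ n : ℕ, T.parent^[n] (f x) = w}
  have hsub : (⋃ x ∈ X₁ ∪ {x | f x ∈ T.desc u₂}, T.pathEdges (f x)) ⊆
      E ∪ T.desc u₂ ∪ T.pathEdges (T.parent u₁) := by
    simp only [Set.iUnion_subset_iff]
    rintro x (hx | hx) w hw
    · rcases T.pathEdges_subset_of_mem_desc (hX₁ hx) hw with hw | hw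
      · exact Or.inl (Or.inl (Set.mem_biUnion hx hw))
      · exact Or.inr hw
    · rcases T.pathEdges_subset_of_mem_desc hx hw with hw | hw
      · exact Or.inl (Or.inr hw.1)
      · exact Or.inr (hpar ▸ hw)
  calc _ ≤ (E ∪ T.desc u₂ ∪ T.pathEdges (T.parent u₁)).ncard :=
        Set.ncard_le_ncard hsub (Set.toFinite _)
    _ ≤ E.ncard + (T.desc u₂).ncard + (T.pathEdges (T.parent u₁)).ncard :=
        (Set.ncard_union_le _ _).trans (Nat.add_le_add_right (Set.ncard_union_le _ _) _)
    _ ≤ _ := Nat.add_le_add_left (T.ncard_pathEdges_le_depthV _) _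

lemma IsPrimaryBranch.exists_sibling {u : V} (hu : T.IsPrimaryBranch u) :
    ∃ u₂, T.IsPrimaryBranch u₂ ∧ u₂ ≠ u ∧ T.parent u₂ = T.parent u := by
  obtain ⟨-, hcc, hanc⟩ := hu
  obtain ⟨u₂, ⟨hpar, hchild⟩, hne⟩ := Set.exists_ne_of_one_lt_ncard hcc u
  have hroot : u₂ ≠ T.root := by
    rintro rfl
    exact hchild (T.parent_root.symm.trans hpar)
  exact ⟨u₂, ⟨hroot, hpar ▸ hcc, hpar ▸ hanc⟩, hne, hpar⟩

end RTree

lemma Submodule.finrank_sup_add_finrank_of_inf_eq {F W : Type} [DivisionRing F]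
    [AddCommGroup W] [Module F W] {A P Q K : Submodule F W} [FiniteDimensional F P]
    [FiniteDimensional F Q] (hAP : A ≤ P) (hKA : K ≤ A) (hPQ : P ⊓ Q = K) :
    Module.finrank F ↥(A ⊔ Q) + Module.finrank F K =
      Module.finrank F A + Module.finrank F Q := by
  have := Submodule.finiteDimensional_of_le hAP
  have hAQ : A ⊓ Q = K :=
    le_antisymm (hPQ ▸ inf_le_inf_right Q hAP) (le_inf hKA (hPQ ▸ inf_le_right))
  rw [← hAQ]
  exact Submodule.finrank_sup_add_finrank_inf_eq A Q

theorem primary_branch_isDepthDecomp_general (F W ι : Type) [Field F] [AddCommGroup W]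
    [Module F W] [Fintype ι] (v : ι → W) {V : Type} [Fintype V] [DecidableEq V]
    (T : RTree V) (f : ι → V)
    (hdd : IsDepthDecompOn (vecRk F v) (vecRk F v Set.univ) T f)
    (hcap : ∀ u' : V, T.IsPrimaryBranch u' → AtCapacity (vecRk F v) T f u')
    (h : ℕ) (hh : ∀ u' : V, T.IsPrimaryBranch u' → T.depthV (T.parent u') = h)
    (K : Submodule F W) (hK : Module.finrank F K = h)
    (hKint : ∀ u₁ u₂ : V, T.IsPrimaryBranch u₁ → T.IsPrimaryBranch u₂ → u₁ ≠ u₂ →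
      Submodule.span F (v '' {x | f x ∈ T.desc u₁}) ⊓
        Submodule.span F (v '' {x | f x ∈ T.desc u₂}) = K) :
    ∀ u' : V, T.IsPrimaryBranch u' →
      (∀ x : ι, f x ∈ T.desc u' → T.IsLeaf (f x)) ∧
      (T.desc u').ncard =
        Module.finrank F
          ↥(Submodule.span F (v '' {x | f x ∈ T.desc u'}) ⊔ K) - h ∧
      ∀ X' : Set ι, X' ⊆ {x | f x ∈ T.desc u'} →
        Module.finrank F ↥(Submodule.span F (v '' X') ⊔ K) - h ≤
          (⋃ x ∈ X', {w : V | w ∈ T.desc u' ∧ ∃ n : ℕ, T.parent^[n] (f x) = w}).ncard := by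
  intro u' hu'
  obtain ⟨u₂, hu₂, hne, hpar⟩ := hu'.exists_sibling
  have hcap_eq : ∀ u, T.IsPrimaryBranch u →
      Module.finrank F (Submodule.span F (v '' {x | f x ∈ T.desc u})) = (T.desc u).ncard + h :=
    fun u hu => hh u hu ▸ hcap u hu
  have hK_inf := hKint u' u₂ hu' hu₂ hne.symm
  have hK_le : K ≤ Submodule.span F (v '' {x | f x ∈ T.desc u'}) := hK_inf ▸ inf_le_left
  have hK_le₂ : K ≤ Submodule.span F (v '' {x | f x ∈ T.desc u₂}) := hK_inf ▸ inf_le_right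
  refine ⟨fun x _ => hdd.1 x, ?_, fun X' hX' => ?_⟩
  · rw [sup_eq_left.2 hK_le, hcap_eq u' hu']
    omega
  · have (S : Set ι) : FiniteDimensional F (Submodule.span F (v '' S)) :=
      FiniteDimensional.span_of_finite F (S.toFinite.image v)
    have hdim := Submodule.finrank_sup_add_finrank_of_inf_eq
      (sup_le (Submodule.span_mono (Set.image_mono hX')) hK_le) le_sup_right hK_inf
    rw [sup_assoc, sup_eq_right.2 hK_le₂, ← Submodule.span_union,
      ← Set.image_union, hK, hcap_eq u₂ hu₂] at hdim
    have hrk := hdd.2.2 (X' ∪ {x | f x ∈ T.desc u₂})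
    have hedges := T.ncard_biUnion_pathEdges_union_le f hpar hX'
    rw [hh u' hu'] at hedges
    unfold vecRk at hrk
    omega

/-- restrictions of a depth-decomposition to primary branches. Let
`(T, f)` be a depth-decomposition of a vector matroid such that `T` is not a rooted path
and each primary branch of `T` is at capacity, let `h` be the depth of the common root
of the primary branches, let `K` be the `h`-dimensional subspace in which the hulls of
any two distinct primary branches intersect, and let `b` be a basis of `K`.  For a
primary branch `S` (determined by the non-root vertex `u'`), let `M'` be the matroid on
the ground set `Ŝ` in which `X' ⊆ Ŝ` is independent iff `X' ∪ {b 0, …, b (h-1)}` is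
linearly independent; the rank of `X' ⊆ Ŝ` in `M'` is `dim (span (X' ∪ K)) - h`.  Then
`(S, f restricted to Ŝ)` is a depth-decomposition of `M'`: the elements of `Ŝ` are
mapped to leaves of `S`, the number `‖S‖` of edges of `S` equals the rank of `M'`, and
the rank in `M'` of every `X' ⊆ Ŝ` is at most the number of edges of `S` contained in
the union of the paths in `S` from the root of `S` to the vertices `f x`, `x ∈ X'`. -/
theorem primary_branch_isDepthDecomp (F W ι : Type) [Field F] [AddCommGroup W]
    [Module F W] [Fintype ι] (v : ι → W) {V : Type} [Fintype V] [DecidableEq V]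
    (T : RTree V) (f : ι → V)
    (hdd : IsDepthDecompOn (vecRk F v) (vecRk F v Set.univ) T f)
    (hnp : ¬ T.IsRootedPath)
    (hcap : ∀ u' : V, T.IsPrimaryBranch u' → AtCapacity (vecRk F v) T f u')
    (h : ℕ) (hh : ∀ u' : V, T.IsPrimaryBranch u' → T.depthV (T.parent u') = h)
    (K : Submodule F W) (hK : Module.finrank F K = h)
    (hKint : ∀ u₁ u₂ : V, T.IsPrimaryBranch u₁ → T.IsPrimaryBranch u₂ → u₁ ≠ u₂ →
      Submodule.span F (v '' {x | f x ∈ T.desc u₁}) ⊓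
        Submodule.span F (v '' {x | f x ∈ T.desc u₂}) = K)
    (b : Fin h → W) (hb : LinearIndependent F b ∧ Submodule.span F (Set.range b) = K) :
    ∀ u' : V, T.IsPrimaryBranch u' →
      (∀ x : ι, f x ∈ T.desc u' → T.IsLeaf (f x)) ∧
      (T.desc u').ncard =
        Module.finrank F
          ↥(Submodule.span F (v '' {x | f x ∈ T.desc u'}) ⊔ K) - h ∧
      ∀ X' : Set ι, X' ⊆ {x | f x ∈ T.desc u'} →
        Module.finrank F ↥(Submodule.span F (v '' X') ⊔ K) - h ≤
          (⋃ x ∈ X', {w : V | w ∈ T.desc u' ∧ ∃ n : ℕ, T.parent^[n] (f x) = w}).ncard :=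
  primary_branch_isDepthDecomp_general F W ι v T f hdd hcap h hh K hK hKint
end
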